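/- Let k ≥ 5 and let H be a disjoint union of t ≥ 2 vertex-disjoint paths, with n_i(H) the order of the i-th longest path. The join K_2 + H contains no Theta graph on k vertices as a subgraph if and only if n_1(H) + n_2(H) ≤ k−3. -/

import Mathlib

open SimpleGraph

/-- The adjacency spectral radius of a finite simple graph. -/
noncomputable def specRad {V : Type*} [Fintype V] [DecidableEq V] (G : SimpleGraph V) : ℝ :=
  letI := Classical.decRel G.Adj
  sSup ((fun μ : ℝ => |μ|) '' spectrum ℝ (G.adjMatrix ℝ))

/-- `G` contains a copy of `H` as a subgraph. -/
def Contains {V W : Type*} (G : SimpleGraph V) (H : SimpleGraph W) : Prop :=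
  ∃ f : W ↪ V, ∀ a b, H.Adj a b → G.Adj (f a) (f b)

/-- `G` contains `C_{l,l}`: two cycles of length `l` sharing exactly one vertex. -/
def ContainsCll {V : Type*} (G : SimpleGraph V) (l : ℕ) : Prop :=
  ∃ (u : V) (c₁ c₂ : G.Walk u u), c₁.IsCycle ∧ c₂.IsCycle ∧ c₁.length = l ∧ c₂.length = l ∧
    ∀ v, v ∈ c₁.support → v ∈ c₂.support → v = u

/-- Theta graph on `k` vertices: the cycle `0,1,…,k-1` plus a chord from `0` to `a`. -/
def thetaGraph (k a : ℕ) : SimpleGraph (Fin k) :=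
  SimpleGraph.fromRel (fun i j =>
    (j : ℕ) = (i : ℕ) + 1 ∨ ((i : ℕ) = k - 1 ∧ (j : ℕ) = 0) ∨ ((i : ℕ) = 0 ∧ (j : ℕ) = a))

/-- `G` contains some member of `Θ_k`, the set of Theta graphs on `k` vertices. -/
def ContainsTheta {V : Type*} (G : SimpleGraph V) (k : ℕ) : Prop :=
  ∃ a, 2 ≤ a ∧ a ≤ k - 2 ∧ Contains G (thetaGraph k a)

/-- The join of two graphs: all edges between the two vertex sets are added. -/
def joinG {V W : Type*} (G : SimpleGraph V) (H : SimpleGraph W) : SimpleGraph (V ⊕ W) where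
  Adj a b := match a, b with
    | Sum.inl a, Sum.inl b => G.Adj a b
    | Sum.inr a, Sum.inr b => H.Adj a b
    | Sum.inl _, Sum.inr _ => True
    | Sum.inr _, Sum.inl _ => True
  symm := by
    constructor
    rintro (a | a) (b | b) h
    · exact h.symm
    · trivial
    · trivial
    · exact h.symm
  loopless := by
    constructor
    rintro (a | a) h
    · exact G.irrefl h
    · exact H.irrefl h

/-- The disjoint union of `t` paths, the `i`-th having `f i` vertices. -/
def pathsUnion (t : ℕ) (f : ℕ → ℕ) : SimpleGraph (Σ i : Fin t, Fin (f i.1)) where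
  Adj a b := a.1 = b.1 ∧ ((a.2 : ℕ) + 1 = (b.2 : ℕ) ∨ (b.2 : ℕ) + 1 = (a.2 : ℕ))
  symm := by
    constructor
    rintro ⟨i, a⟩ ⟨j, b⟩ ⟨h₁, h₂⟩
    exact ⟨h₁.symm, h₂.symm⟩
  loopless := by
    constructor
    rintro ⟨i, a⟩ ⟨-, h⟩
    omega

/-- `H` is a minor of `G`: disjoint connected branch sets, one for each vertex of `H`,
with edges of `G` between branch sets corresponding to edges of `H`. -/
def IsMinor {V W : Type*} (H : SimpleGraph W) (G : SimpleGraph V) : Prop :=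
  ∃ B : W → Set V, (∀ w, (B w).Nonempty) ∧ (∀ w, (G.induce (B w)).Connected) ∧
    (∀ w₁ w₂, w₁ ≠ w₂ → Disjoint (B w₁) (B w₂)) ∧
    ∀ w₁ w₂, H.Adj w₁ w₂ → ∃ v₁ ∈ B w₁, ∃ v₂ ∈ B w₂, G.Adj v₁ v₂

/-- Planarity via Wagner's theorem: no `K₅` minor and no `K₃,₃` minor. -/
def IsPlanar {V : Type*} (G : SimpleGraph V) : Prop :=
  ¬ IsMinor (⊤ : SimpleGraph (Fin 5)) G ∧
  ¬ IsMinor (completeBipartiteGraph (Fin 3) (Fin 3)) G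

/-!
A Theta graph on `k` vertices has a Hamiltonian cycle. Along a `k`-cycle in `K₂ + H` the
vertices of `H` can only change path by passing through one of the two apexes, so they lie
on at most two paths of `H`, and there are at least `k - 2` of them: `k - 2 ≤ n₁ + n₂`.
Conversely, if `n₁ + n₂ ≥ k - 2`, the cycle apex, part of the longest path, apex, part of the
second longest path, together with the chord between the two apexes, is a Theta graph.
-/

open Finset

lemma Contains.mono {V W : Type*} {G : SimpleGraph V} {H H' : SimpleGraph W}
    (h : Contains G H') (hle : H ≤ H') : Contains G H :=
  let ⟨φ, hφ⟩ := h
  ⟨φ, fun a b hab => hφ a b (hle hab)⟩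

lemma thetaGraph_adj_add_one (n a : ℕ) (i : Fin (n + 2)) :
    (thetaGraph (n + 2) a).Adj i (i + 1) := by
  rw [thetaGraph, fromRel_adj]
  refine ⟨by simp, Or.inl ?_⟩
  rw [Fin.val_add_one]
  split_ifs with h
  · exact Or.inr (Or.inl ⟨by simp [h], rfl⟩)
  · exact Or.inl rfl

lemma cycleGraph_le_thetaGraph (n a : ℕ) : cycleGraph (n + 2) ≤ thetaGraph (n + 2) a := by
  intro u v huv
  rcases cycleGraph_adj.1 huv with h | h
  · rw [sub_eq_iff_eq_add'] at h
    exact h ▸ (thetaGraph_adj_add_one n a v).symm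
  · rw [sub_eq_iff_eq_add'] at h
    exact h ▸ thetaGraph_adj_add_one n a u

lemma sum_le_sum_range_card_of_antitone {M : Type*} [AddCommMonoid M] [PartialOrder M]
    [IsOrderedAddMonoid M] {f : ℕ → M} (hf : Antitone f) (s : Finset ℕ) :
    ∑ i ∈ s, f i ≤ ∑ i ∈ range #s, f i := by
  induction s using Finset.induction_on_max with
  | empty => simp
  | insert a s ha ih =>
    have has : a ∉ s := fun h => lt_irrefl a (ha a h)
    have hcard : #s ≤ a := by simpa using card_le_card fun x hx => mem_range.2 (ha x hx)
    rw [sum_insert has, card_insert_of_notMem has, sum_range_succ, add_comm]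
    exact add_le_add ih (hf hcard)

lemma card_filter_fst_eq {ι : Type*} [Fintype ι] [DecidableEq ι] {β : ι → Type*}
    [∀ i, Fintype (β i)] (i : ι) : #{x : Σ i, β i | x.1 = i} = Fintype.card (β i) := by
  rw [← Fintype.card_subtype]
  exact Fintype.card_congr (Equiv.sigmaSubtype i)

section CycleInJoin

variable {V W ι : Type*} {G : SimpleGraph V} {H : SimpleGraph W} {n : ℕ} {c : W → ι}

@[simp]
lemma joinG_inr_adj_inr {x y : W} : (joinG G H).Adj (.inr x) (.inr y) ↔ H.Adj x y :=
  Iff.rfl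

-- Take the first vertex after `a` labelled `c x`: its predecessor is not in `H`, unless it is `a`.
open Fin.NatCast in
lemma exists_inr_or_exists_inl_before (hc : ∀ x y, H.Adj x y → c x = c y)
    {φ : Fin (n + 1) → V ⊕ W} (hφ : ∀ i, (joinG G H).Adj (φ i) (φ (i + 1)))
    (a i : Fin (n + 1)) {x : W} (hi : φ i = .inr x) :
    (∃ y, φ a = .inr y ∧ c y = c x) ∨
      ∃ j v y, φ j = .inl v ∧ φ (j + 1) = .inr y ∧ c y = c x := by
  classical
  have hP : ∃ d : ℕ, ∃ y, φ (a + d) = .inr y ∧ c y = c x :=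
    ⟨(i - a : Fin (n + 1)).val, x, by simp [hi], rfl⟩
  obtain ⟨y, hy, hyc⟩ := Nat.find_spec hP
  rcases hd : Nat.find hP with _ | d
  · left
    rw [hd] at hy
    exact ⟨y, by simpa using hy, hyc⟩
  · right
    rw [hd, Nat.cast_succ, ← add_assoc] at hy
    cases hz : φ (a + d) with
    | inl v => exact ⟨a + d, v, y, hz, hy, hyc⟩
    | inr z =>
      have hzy : H.Adj z y := by simpa only [hz, hy, joinG_inr_adj_inr] using hφ (a + d)
      exact absurd ⟨z, hz, (hc z y hzy).trans hyc⟩ (Nat.find_min hP (hd ▸ d.lt_succ_self))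

lemma card_image_toRight_le [DecidableEq ι] (hc : ∀ x y, H.Adj x y → c x = c y)
    (φ : Fin (n + 1) ↪ V ⊕ W) (hφ : ∀ i, (joinG G H).Adj (φ i) (φ (i + 1))) :
    #((univ.map φ).toRight.image c) ≤ max 1 #(univ.map φ).toLeft := by
  by_cases hapex : ∃ a v, φ a = .inl v
  · obtain ⟨a, v₀, ha⟩ := hapex
    refine le_max_of_le_right (card_le_card_of_forall_subsingleton
      (fun ℓ v => ∃ j y, φ j = .inl v ∧ φ (j + 1) = .inr y ∧ c y = ℓ) ?_ ?_)
    · simp only [mem_image, mem_toRight, mem_map, mem_univ, true_and]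
      rintro _ ⟨x, ⟨i, hi⟩, rfl⟩
      rcases exists_inr_or_exists_inl_before hc hφ a i hi with
        ⟨y, hy, -⟩ | ⟨j, v, y, hj, hjy, hyc⟩
      · simp [ha] at hy
      · exact ⟨v, mem_toLeft.2 (mem_map.2 ⟨j, mem_univ _, hj⟩), j, y, hj, hjy, hyc⟩
    · rintro v - ℓ ⟨-, j, y, hj, hjy, rfl⟩ ℓ' ⟨-, j', y', hj', hjy', rfl⟩
      obtain rfl : j = j' := φ.injective (hj.trans hj'.symm)
      obtain rfl : y = y' := Sum.inr_injective (hjy.symm.trans hjy')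
      rfl
  · push Not at hapex
    refine le_max_of_le_left (card_le_one.2 ?_)
    suffices ∀ ℓ ∈ (univ.map φ).toRight.image c, ∃ y, φ 0 = .inr y ∧ c y = ℓ by
      intro ℓ hℓ ℓ' hℓ'
      obtain ⟨y, hy, rfl⟩ := this ℓ hℓ
      obtain ⟨y', hy', rfl⟩ := this ℓ' hℓ'
      rw [Sum.inr_injective (hy.symm.trans hy')]
    simp only [mem_image, mem_toRight, mem_map, mem_univ, true_and]
    rintro _ ⟨x, ⟨i, hi⟩, rfl⟩
    rcases exists_inr_or_exists_inl_before hc hφ 0 i hi with h | ⟨j, v, -, hj, -⟩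
    · exact h
    · exact absurd hj (hapex j v)

end CycleInJoin

lemma le_of_contains_cycleGraph {t n : ℕ} {f : ℕ → ℕ} (hf : Antitone f)
    (h : Contains (joinG (⊤ : SimpleGraph (Fin 2)) (pathsUnion t f)) (cycleGraph (n + 2))) :
    n ≤ f 0 + f 1 := by
  obtain ⟨φ, hφ⟩ := h
  set S := univ.map φ
  set L := S.toRight.image Sigma.fst
  have hA : #S.toLeft ≤ 2 := by simpa using card_le_univ S.toLeft
  have hL : #L ≤ 2 :=
    (card_image_toRight_le (H := pathsUnion t f) (fun _ _ h => h.1) φ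
      fun i => hφ _ _ (cycleGraph_adj.2 (Or.inr (add_sub_cancel_left i 1)))).trans
      (max_le one_le_two hA)
  have hR : #S.toRight ≤ ∑ j ∈ L, f j := by
    rw [card_eq_sum_card_image Sigma.fst S.toRight]
    gcongr with j
    exact (card_le_card (filter_subset_filter _ (subset_univ _))).trans_eq
      ((card_filter_fst_eq j).trans (Fintype.card_fin _))
  have hsum : ∑ j ∈ L, f j ≤ f 0 + f 1 :=
    calc ∑ j ∈ L, f j = ∑ i ∈ L.map Fin.valEmbedding, f i := by rw [sum_map]; rfl
      _ ≤ ∑ i ∈ range #(L.map Fin.valEmbedding), f i := sum_le_sum_range_card_of_antitone hf _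
      _ ≤ ∑ i ∈ range 2, f i :=
        sum_le_sum_of_subset (range_subset_range.2 (by simpa using hL))
      _ = f 0 + f 1 := by simp [sum_range_succ]
  have hS : #S.toLeft + #S.toRight = n + 2 := by simp [card_toLeft_add_card_toRight, S]
  omega

section ThetaInJoin

variable {t : ℕ} {f : ℕ → ℕ} (i j : Fin t) {p q : ℕ} (hp : p ≤ f i) (hq : q ≤ f j)

-- The chord `0 — (p + 1)` of the Theta graph joins the two apexes.
def thetaEmbedding (m : Fin (p + q + 2)) : Fin 2 ⊕ Σ i : Fin t, Fin (f i.1) :=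
  if h₀ : m.1 = 0 then .inl 0
  else if h₁ : m.1 ≤ p then .inr ⟨i, m.1 - 1, by omega⟩
  else if h₂ : m.1 = p + 1 then .inl 1
  else .inr ⟨j, m.1 - p - 2, by have := m.2; omega⟩

lemma thetaEmbedding_injective (hij : i ≠ j) :
    Function.Injective (thetaEmbedding i j hp hq) := by
  intro a b hab
  apply Fin.ext
  simp only [thetaEmbedding] at hab
  split_ifs at hab <;> simp [Fin.ext_iff] at hab <;> omega

lemma thetaEmbedding_adj (a b : Fin (p + q + 2))
    (hab : b.1 = a.1 + 1 ∨ (a.1 = p + q + 2 - 1 ∧ b.1 = 0) ∨ (a.1 = 0 ∧ b.1 = p + 1)) :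
    (joinG ⊤ (pathsUnion t f)).Adj (thetaEmbedding i j hp hq a) (thetaEmbedding i j hp hq b) := by
  have := a.2
  have := b.2
  simp only [thetaEmbedding]
  split_ifs <;> simp [joinG, pathsUnion] <;> omega

end ThetaInJoin

lemma contains_thetaGraph {t : ℕ} {f : ℕ → ℕ} {i j : Fin t} (hij : i ≠ j) {p q : ℕ}
    (hp : p ≤ f i) (hq : q ≤ f j) :
    Contains (joinG (⊤ : SimpleGraph (Fin 2)) (pathsUnion t f))
      (thetaGraph (p + q + 2) (p + 1)) := by
  refine ⟨⟨thetaEmbedding i j hp hq, thetaEmbedding_injective i j hp hq hij⟩,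
    fun a b hab => ?_⟩
  rw [thetaGraph, fromRel_adj] at hab
  exact hab.2.elim (thetaEmbedding_adj i j hp hq a b) fun h =>
    (thetaEmbedding_adj i j hp hq b a h).symm

theorem stmt8 (k t : ℕ) (hk : 5 ≤ k) (ht : 2 ≤ t) (f : ℕ → ℕ) (hf : Antitone f)
    (hft : ∀ i, 1 ≤ f i ↔ i < t) :
    (¬ ContainsTheta (joinG (⊤ : SimpleGraph (Fin 2)) (pathsUnion t f)) k) ↔
      f 0 + f 1 ≤ k - 3 := by
  obtain ⟨n, rfl⟩ : ∃ n, k = n + 2 := ⟨k - 2, by omega⟩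
  constructor
  · intro hθ
    by_contra! hlarge
    have hf1 : 1 ≤ f 1 := (hft 1).2 ht
    have hf01 : f 1 ≤ f 0 := hf zero_le_one
    obtain ⟨p, q, rfl, hp, hq, hpf, hqf⟩ :
        ∃ p q, n = p + q ∧ 1 ≤ p ∧ 1 ≤ q ∧ p ≤ f 0 ∧ q ≤ f 1 :=
      ⟨n - min (f 1) (n - 1), min (f 1) (n - 1), by omega⟩
    exact hθ ⟨p + 1, by omega, by omega,
      contains_thetaGraph (i := ⟨0, by omega⟩) (j := ⟨1, ht⟩) (by simp) hpf hqf⟩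
  · rintro hsum ⟨a, -, -, hθ⟩
    have := le_of_contains_cycleGraph hf (hθ.mono (cycleGraph_le_thetaGraph n a))
    omega
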